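/- (Correctness of Gosper's construction.) Let t(k) be a function with t(k+1)/t(k) = [p(k+1)/p(k)]·[q(k)/r(k+1)] for polynomials p, q, r, and suppose a polynomial s(k) satisfies p(k) = q(k)s(k+1) − r(k)s(k) for all k. Define T(k) := r(k)s(k)t(k)/p(k). Then t(k) = T(k+1) − T(k) for all k where the expressions are defined, and consequently Σ_{k=A}^{B} t(k) = T(B+1) − T(A). -/

import Mathlib

/-!
After clearing the denominators `p(k) p(k+1)`, the identity `T(k+1) - T(k) = t(k)` is
`s(k+1)` times the ratio condition minus `p(k+1) t(k)` times Gosper's equation at `k`.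
Summing over `[A, B]` then telescopes.
-/

open Finset Polynomial

noncomputable section

theorem Finset.sum_Icc_int_eq_sub_of_eq_sub {M : Type*} [AddCommGroup M] {f T : ℤ → M}
    {A B : ℤ} (hAB : A ≤ B + 1) (hf : ∀ k, A ≤ k → k ≤ B → f k = T (k + 1) - T k) :
    ∑ k ∈ Icc A B, f k = T (B + 1) - T A := by
  induction B, (by omega : A - 1 ≤ B) using Int.leInduction with
  | base => simp
  | succ n _ ih =>
    rw [← insert_Icc_right_eq_Icc_add_one (by omega), sum_insert (by simp),
      ih (by omega) fun k hk hkn => hf k hk (by omega), hf (n + 1) (by omega) le_rfl]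
    abel

section Gosper

variable {K : Type*} [Field K]

def gosperTerm (p r s : K[X]) (t : ℤ → K) (k : ℤ) : K :=
  r.eval (k : K) * s.eval (k : K) * t k / p.eval (k : K)

theorem gosperTerm_add_one_sub {p q r s : K[X]} {t : ℤ → K} {k : ℤ}
    (hpk : p.eval (k : K) ≠ 0) (hpk' : p.eval ((k : K) + 1) ≠ 0)
    (hratio : t (k + 1) * (p.eval (k : K) * r.eval ((k : K) + 1))
      = t k * (p.eval ((k : K) + 1) * q.eval (k : K)))
    (hgosper : p.eval (k : K)
      = q.eval (k : K) * s.eval ((k : K) + 1) - r.eval (k : K) * s.eval (k : K)) :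
    gosperTerm p r s t (k + 1) - gosperTerm p r s t k = t k := by
  rw [gosperTerm, gosperTerm, Int.cast_add, Int.cast_one, div_sub_div _ _ hpk' hpk,
    div_eq_iff (mul_ne_zero hpk' hpk)]
  linear_combination s.eval ((k : K) + 1) * hratio - (p.eval ((k : K) + 1) * t k) * hgosper

end Gosper

theorem stmt16 (A B : ℤ) (t : ℤ → ℝ) (p q r s : Polynomial ℝ)
    (hp : ∀ k : ℤ, A ≤ k → k ≤ B + 1 → p.eval (k : ℝ) ≠ 0)
    (hratio : ∀ k : ℤ, A ≤ k → k ≤ B →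
      t (k + 1) * (p.eval (k : ℝ) * r.eval ((k : ℝ) + 1))
        = t k * (p.eval ((k : ℝ) + 1) * q.eval (k : ℝ)))
    (hgosper : ∀ k : ℝ, p.eval k = q.eval k * s.eval (k + 1) - r.eval k * s.eval k) :
    (∀ k : ℤ, A ≤ k → k ≤ B →
      t k = (r.eval ((k : ℝ) + 1) * s.eval ((k : ℝ) + 1) * t (k + 1) / p.eval ((k : ℝ) + 1))
        - (r.eval (k : ℝ) * s.eval (k : ℝ) * t k / p.eval (k : ℝ)))
    ∧ (A ≤ B + 1 →
      ∑ k ∈ Finset.Icc A B, t k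
        = (r.eval ((B : ℝ) + 1) * s.eval ((B : ℝ) + 1) * t (B + 1) / p.eval ((B : ℝ) + 1))
          - (r.eval (A : ℝ) * s.eval (A : ℝ) * t A / p.eval (A : ℝ))) := by
  have hstep : ∀ k, A ≤ k → k ≤ B → t k = gosperTerm p r s t (k + 1) - gosperTerm p r s t k :=
    fun k hAk hkB => (gosperTerm_add_one_sub (hp k hAk (by omega))
      (by exact_mod_cast hp (k + 1) (by omega) (by omega)) (hratio k hAk hkB) (hgosper k)).symm
  refine ⟨fun k hAk hkB => ?_, fun hAB => ?_⟩
  · simpa [gosperTerm] using hstep k hAk hkB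
  · simpa [gosperTerm] using sum_Icc_int_eq_sub_of_eq_sub hAB hstep
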